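/- Let s ∈ (1/2, 2]. Define the infinite matrix Â by Â_{mn} = m^{s−1}·n^{−s} if n ≥ m and Â_{mn} = m^{−1} if m > n (for m,n ≥ 1; the two formulas agree when m = n). Then Â defines a bounded operator on ℓ²: there exists C > 0 such that for every finitely supported sequence (x_n)_{n≥1} of nonnegative reals, ∑_{m≥1} ( ∑_{n≥1} Â_{mn} x_n )² ≤ C · ∑_{n≥1} x_n². -/

import Mathlib

/-
Schur test with the weight `w n = (n + 1) ^ (-1/2)`: the row sums `∑ₙ Â_{mn} w n` and the
column sums `∑ₘ Â_{mn} w m` are bounded by multiples of `w m` and `w n` respectively.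
Each reduces to partial sums of `(n + 1) ^ (-p)` over `n ≥ m` (with `p > 1`) or over `n ≤ m`
(with `p < 1`), which are `O((m + 1) ^ (1 - p))` by telescoping against `(n + 1) ^ (1 - p)`.
The exponents are `p = s + 1/2` and `p = 3/2 - s`, so both conditions amount to `s > 1/2`.
-/

open Finset Real

lemma one_add_div_le_rpow_add_one_div {x r : ℝ} (hx : 0 < x) (hr : 0 ≤ r) :
    1 + r / (x + 1) ≤ ((x + 1) / x) ^ r := by
  have hlog : 1 / (x + 1) ≤ log ((x + 1) / x) := by
    have h := log_le_sub_one_of_pos (show 0 < x / (x + 1) by positivity)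
    rw [← inv_div x, log_inv]
    have : x / (x + 1) - 1 = -(1 / (x + 1)) := by field_simp; ring
    linarith
  calc 1 + r / (x + 1) ≤ r * log ((x + 1) / x) + 1 := by
        rw [add_comm, ← mul_one_div]; gcongr
    _ ≤ exp (r * log ((x + 1) / x)) := add_one_le_exp _
    _ = ((x + 1) / x) ^ r := by rw [rpow_def_of_pos (by positivity), mul_comm]

lemma mul_rpow_neg_le_rpow_sub_rpow {x p : ℝ} (hx : 0 < x) (hp : 1 ≤ p) :
    (p - 1) * (x + 1) ^ (-p) ≤ x ^ (1 - p) - (x + 1) ^ (1 - p) := by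
  have hx1 : 0 < x + 1 := by positivity
  have h := mul_le_mul_of_nonneg_right (one_add_div_le_rpow_add_one_div hx (sub_nonneg.2 hp))
    (rpow_nonneg hx1.le (1 - p))
  have hx_pow : ((x + 1) / x) ^ (p - 1) * (x + 1) ^ (1 - p) = x ^ (1 - p) := by
    rw [div_rpow hx1.le hx.le, div_mul_eq_mul_div, ← rpow_add hx1, sub_add_sub_cancel',
      sub_self, rpow_zero, one_div, ← rpow_neg hx.le, neg_sub]
  have hx1_pow : (x + 1) ^ (-p) = (x + 1) ^ (1 - p) / (x + 1) := by
    rw [← rpow_sub_one hx1.ne', sub_sub_cancel_left]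
  rw [hx_pow] at h
  rw [hx1_pow]
  linear_combination h

lemma mul_rpow_div_le_rpow_sub_rpow {x p : ℝ} (hx : 0 < x) (hp : p ≤ 1) :
    (1 - p) * (x ^ (1 - p) / (x + 1)) ≤ (x + 1) ^ (1 - p) - x ^ (1 - p) := by
  have h := mul_le_mul_of_nonneg_right (one_add_div_le_rpow_add_one_div hx (sub_nonneg.2 hp))
    (rpow_nonneg hx.le (1 - p))
  rw [div_rpow (by positivity) hx.le, div_mul_cancel₀ _ (rpow_pos_of_pos hx _).ne'] at h
  linear_combination h

lemma sum_sub_le_of_subset_Ico {α : Type*} [AddCommGroup α] [PartialOrder α]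
    [IsOrderedAddMonoid α] {f : ℕ → α} (hf : Monotone f) {S : Finset ℕ} {m N : ℕ} (hmN : m ≤ N)
    (hS : S ⊆ Ico m N) : ∑ n ∈ S, (f (n + 1) - f n) ≤ f N - f m :=
  (sum_le_sum_of_subset_of_nonneg hS fun n _ _ ↦ sub_nonneg.2 (hf n.le_succ)).trans_eq
    (sum_Ico_sub f hmN)

lemma sum_rpow_neg_le_of_one_lt {p : ℝ} (hp : 1 < p) {m : ℕ} {S : Finset ℕ}
    (hS : ∀ n ∈ S, m ≤ n) :
    ∑ n ∈ S, ((n : ℝ) + 1) ^ (-p) ≤ 2 ^ p / (p - 1) * ((m : ℝ) + 1) ^ (1 - p) := by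
  set a : ℕ → ℝ := fun n ↦ -((n : ℝ) + 1) ^ (1 - p) with ha_def
  have ha : Monotone a := monotone_nat_of_le_succ fun n ↦ by
    simp only [ha_def, Nat.cast_succ, neg_le_neg_iff]
    exact rpow_le_rpow_of_nonpos (by positivity) (by linarith) (by linarith)
  have hterm (n : ℕ) : ((n : ℝ) + 1) ^ (-p) ≤ 2 ^ p / (p - 1) * (a (n + 1) - a n) := by
    have hn : (0 : ℝ) < n + 1 := by positivity
    have hshift : ((n : ℝ) + 1) ^ (-p) ≤ 2 ^ p * ((n + 1 : ℝ) + 1) ^ (-p) :=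
      calc ((n : ℝ) + 1) ^ (-p) = 2 ^ p * (2 * ((n : ℝ) + 1)) ^ (-p) := by
            rw [mul_rpow zero_le_two hn.le, ← mul_assoc, ← rpow_add two_pos, add_neg_cancel,
              rpow_zero, one_mul]
        _ ≤ 2 ^ p * ((n + 1 : ℝ) + 1) ^ (-p) := by
            refine mul_le_mul_of_nonneg_left ?_ (rpow_nonneg zero_le_two p)
            exact rpow_le_rpow_of_nonpos (by positivity) (by linarith) (by linarith)
    have h := mul_rpow_neg_le_rpow_sub_rpow hn hp.le
    simp only [ha_def, Nat.cast_succ]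
    rw [div_mul_eq_mul_div, le_div_iff₀ (by linarith)]
    nlinarith [rpow_pos_of_pos two_pos p]
  obtain ⟨N, hmN, hSN⟩ : ∃ N, m ≤ N ∧ S ⊆ Ico m N :=
    ⟨m + S.sup id + 1, by omega, fun n hn ↦ mem_Ico.2 ⟨hS n hn, by
      have := le_sup (f := id) hn; simp only [id] at this; omega⟩⟩
  calc ∑ n ∈ S, ((n : ℝ) + 1) ^ (-p) ≤ ∑ n ∈ S, 2 ^ p / (p - 1) * (a (n + 1) - a n) :=
        sum_le_sum fun n _ ↦ hterm n
    _ ≤ 2 ^ p / (p - 1) * (a N - a m) := by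
        rw [← mul_sum]
        exact mul_le_mul_of_nonneg_left (sum_sub_le_of_subset_Ico ha hmN hSN)
          (div_nonneg (rpow_nonneg zero_le_two p) (by linarith))
    _ ≤ 2 ^ p / (p - 1) * ((m : ℝ) + 1) ^ (1 - p) := by
        gcongr
        simp only [ha_def]
        linarith [rpow_nonneg (by positivity : (0 : ℝ) ≤ N + 1) (1 - p)]

lemma sum_rpow_neg_le_of_lt_one {p : ℝ} (hp : p < 1) {m : ℕ} {S : Finset ℕ}
    (hS : ∀ n ∈ S, n ≤ m) :
    ∑ n ∈ S, ((n : ℝ) + 1) ^ (-p) ≤ 2 ^ (2 - p) / (1 - p) * ((m : ℝ) + 1) ^ (1 - p) := by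
  set b : ℕ → ℝ := fun n ↦ ((n : ℝ) + 1) ^ (1 - p) with hb_def
  have hb : Monotone b := monotone_nat_of_le_succ fun n ↦ by
    simp only [hb_def, Nat.cast_succ]
    exact rpow_le_rpow (by positivity) (by linarith) (by linarith)
  have hterm (n : ℕ) : ((n : ℝ) + 1) ^ (-p) ≤ 2 / (1 - p) * (b (n + 1) - b n) := by
    have hn : (0 : ℝ) < n + 1 := by positivity
    have hhalf : ((n : ℝ) + 1) ^ (-p) ≤ 2 * (((n : ℝ) + 1) ^ (1 - p) / ((n + 1 : ℝ) + 1)) := by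
      rw [sub_eq_add_neg, rpow_add hn, rpow_one, mul_div_assoc',
        le_div_iff₀ (by positivity)]
      nlinarith [rpow_pos_of_pos hn (-p)]
    have h := mul_rpow_div_le_rpow_sub_rpow hn hp.le
    simp only [hb_def, Nat.cast_succ]
    rw [div_mul_eq_mul_div, le_div_iff₀ (by linarith)]
    nlinarith
  calc ∑ n ∈ S, ((n : ℝ) + 1) ^ (-p) ≤ ∑ n ∈ S, 2 / (1 - p) * (b (n + 1) - b n) :=
        sum_le_sum fun n _ ↦ hterm n
    _ ≤ 2 / (1 - p) * (b (m + 1) - b 0) := by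
        rw [← mul_sum]
        exact mul_le_mul_of_nonneg_left (sum_sub_le_of_subset_Ico hb (Nat.zero_le _)
          fun n hn ↦ mem_Ico.2 ⟨Nat.zero_le n, Nat.lt_succ_of_le (hS n hn)⟩)
          (div_nonneg zero_le_two (by linarith))
    _ ≤ 2 / (1 - p) * (2 * ((m : ℝ) + 1)) ^ (1 - p) := by
        gcongr
        simp only [hb_def, Nat.cast_succ, Nat.cast_zero, zero_add, one_rpow]
        linarith [rpow_le_rpow (by positivity) (by linarith : (m : ℝ) + 1 + 1 ≤ 2 * ((m : ℝ) + 1))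
          (by linarith : 0 ≤ 1 - p)]
    _ = 2 ^ (2 - p) / (1 - p) * ((m : ℝ) + 1) ^ (1 - p) := by
        rw [mul_rpow zero_le_two (by positivity), show 2 - p = 1 + (1 - p) by ring,
          rpow_add two_pos, rpow_one]
        ring

theorem schur_test {ι κ : Type*} {A : ι → κ → ℝ} {p : ι → ℝ} {q : κ → ℝ} {M : Finset ι}
    {F : Finset κ} {α β : ℝ} (hA : ∀ i j, 0 ≤ A i j) (hq : ∀ j, 0 < q j) (hα : 0 ≤ α)
    (hrow : ∀ i ∈ M, ∑ j ∈ F, A i j * q j ≤ α * p i)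
    (hcol : ∀ j ∈ F, ∑ i ∈ M, A i j * p i ≤ β * q j) (x : κ → ℝ) :
    ∑ i ∈ M, (∑ j ∈ F, A i j * x j) ^ 2 ≤ α * β * ∑ j ∈ F, x j ^ 2 := by
  have hrow_sq (i : ι) (hi : i ∈ M) :
      (∑ j ∈ F, A i j * x j) ^ 2 ≤ α * p i * ∑ j ∈ F, A i j * (x j ^ 2 / q j) := by
    have hnonneg : ∀ j ∈ F, 0 ≤ A i j * (x j ^ 2 / q j) := fun j _ ↦
      mul_nonneg (hA i j) (div_nonneg (sq_nonneg _) (hq j).le)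
    calc (∑ j ∈ F, A i j * x j) ^ 2
        ≤ (∑ j ∈ F, A i j * q j) * ∑ j ∈ F, A i j * (x j ^ 2 / q j) :=
          sum_sq_le_sum_mul_sum_of_sq_le_mul F (fun j _ ↦ mul_nonneg (hA i j) (hq j).le)
            hnonneg fun j _ ↦ le_of_eq (by field_simp [(hq j).ne'])
      _ ≤ α * p i * ∑ j ∈ F, A i j * (x j ^ 2 / q j) :=
          mul_le_mul_of_nonneg_right (hrow i hi) (sum_nonneg hnonneg)
  calc ∑ i ∈ M, (∑ j ∈ F, A i j * x j) ^ 2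
      ≤ ∑ i ∈ M, α * p i * ∑ j ∈ F, A i j * (x j ^ 2 / q j) := sum_le_sum hrow_sq
    _ = ∑ j ∈ F, α * (x j ^ 2 / q j) * ∑ i ∈ M, A i j * p i := by
        simp only [mul_sum]
        rw [sum_comm]
        exact sum_congr rfl fun j _ ↦ sum_congr rfl fun i _ ↦ by ring
    _ ≤ ∑ j ∈ F, α * (x j ^ 2 / q j) * (β * q j) := sum_le_sum fun j hj ↦
        mul_le_mul_of_nonneg_left (hcol j hj) (mul_nonneg hα (div_nonneg (sq_nonneg _) (hq j).le))
    _ = α * β * ∑ j ∈ F, x j ^ 2 := by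
        rw [mul_sum]
        exact sum_congr rfl fun j _ ↦ by field_simp [(hq j).ne']

/-- The paper's `Â` with indices starting at `0`: `hatA s m n = Â_{m+1, n+1}`. -/
noncomputable def hatA (s : ℝ) (m n : ℕ) : ℝ :=
  if m ≤ n then ((m : ℝ) + 1) ^ (s - 1) * ((n : ℝ) + 1) ^ (-s) else ((m : ℝ) + 1) ^ (-1 : ℝ)

lemma hatA_nonneg (s : ℝ) (m n : ℕ) : 0 ≤ hatA s m n := by
  unfold hatA; split_ifs <;> positivity

lemma hatA_row_sum_le {s : ℝ} (hs : 1 / 2 < s) : ∃ K > 0, ∀ (m : ℕ) (F : Finset ℕ),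
    ∑ n ∈ F, hatA s m n * ((n : ℝ) + 1) ^ (-(1 / 2 : ℝ)) ≤ K * ((m : ℝ) + 1) ^ (-(1 / 2 : ℝ)) := by
  have hs' : 0 < s + 1 / 2 - 1 := by linarith
  refine ⟨2 ^ (s + 1 / 2) / (s + 1 / 2 - 1) + 2 ^ (2 - 1 / 2 : ℝ) / (1 - 1 / 2), by positivity,
    fun m F ↦ ?_⟩
  have hm : (0 : ℝ) < m + 1 := by positivity
  simp only [hatA, ite_mul]
  rw [sum_ite]
  have hupper : ∑ n ∈ F with m ≤ n, ((m : ℝ) + 1) ^ (s - 1) * ((n : ℝ) + 1) ^ (-s) *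
      ((n : ℝ) + 1) ^ (-(1 / 2 : ℝ)) ≤
      2 ^ (s + 1 / 2) / (s + 1 / 2 - 1) * ((m : ℝ) + 1) ^ (-(1 / 2 : ℝ)) :=
    calc _ = ((m : ℝ) + 1) ^ (s - 1) * ∑ n ∈ F with m ≤ n, ((n : ℝ) + 1) ^ (-(s + 1 / 2)) := by
          rw [mul_sum]
          refine sum_congr rfl fun n _ ↦ ?_
          rw [mul_assoc, ← rpow_add (by positivity), neg_add]
      _ ≤ ((m : ℝ) + 1) ^ (s - 1) *
            (2 ^ (s + 1 / 2) / (s + 1 / 2 - 1) * ((m : ℝ) + 1) ^ (1 - (s + 1 / 2))) := by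
          gcongr
          exact sum_rpow_neg_le_of_one_lt (by linarith) fun n hn ↦ (mem_filter.1 hn).2
      _ = _ := by
          rw [mul_left_comm, ← rpow_add hm]
          ring_nf
  have hlower : ∑ n ∈ F with ¬m ≤ n, ((m : ℝ) + 1) ^ (-1 : ℝ) * ((n : ℝ) + 1) ^ (-(1 / 2 : ℝ)) ≤
      2 ^ (2 - 1 / 2 : ℝ) / (1 - 1 / 2) * ((m : ℝ) + 1) ^ (-(1 / 2 : ℝ)) :=
    calc _ = ((m : ℝ) + 1) ^ (-1 : ℝ) * ∑ n ∈ F with ¬m ≤ n, ((n : ℝ) + 1) ^ (-(1 / 2 : ℝ)) :=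
          (mul_sum _ _ _).symm
      _ ≤ ((m : ℝ) + 1) ^ (-1 : ℝ) *
            (2 ^ (2 - 1 / 2 : ℝ) / (1 - 1 / 2) * ((m : ℝ) + 1) ^ (1 - 1 / 2 : ℝ)) := by
          gcongr
          exact sum_rpow_neg_le_of_lt_one (by norm_num) fun n hn ↦ (not_le.1 (mem_filter.1 hn).2).le
      _ = _ := by
          rw [mul_left_comm, ← rpow_add hm]
          norm_num
  linarith

lemma hatA_col_sum_le {s : ℝ} (hs : 1 / 2 < s) : ∃ K > 0, ∀ (n : ℕ) (M : Finset ℕ),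
    ∑ m ∈ M, hatA s m n * ((m : ℝ) + 1) ^ (-(1 / 2 : ℝ)) ≤ K * ((n : ℝ) + 1) ^ (-(1 / 2 : ℝ)) := by
  have hs' : 0 < 1 - (3 / 2 - s) := by linarith
  refine ⟨2 ^ (2 - (3 / 2 - s)) / (1 - (3 / 2 - s)) + 2 ^ (3 / 2 : ℝ) / (3 / 2 - 1), by positivity,
    fun n M ↦ ?_⟩
  have hn : (0 : ℝ) < n + 1 := by positivity
  simp only [hatA, ite_mul]
  rw [sum_ite]
  have hupper : ∑ m ∈ M with m ≤ n, ((m : ℝ) + 1) ^ (s - 1) * ((n : ℝ) + 1) ^ (-s) *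
      ((m : ℝ) + 1) ^ (-(1 / 2 : ℝ)) ≤
      2 ^ (2 - (3 / 2 - s)) / (1 - (3 / 2 - s)) * ((n : ℝ) + 1) ^ (-(1 / 2 : ℝ)) :=
    calc _ = ((n : ℝ) + 1) ^ (-s) * ∑ m ∈ M with m ≤ n, ((m : ℝ) + 1) ^ (-(3 / 2 - s)) := by
          rw [mul_sum]
          refine sum_congr rfl fun m _ ↦ ?_
          rw [mul_right_comm, ← rpow_add (by positivity), mul_comm]
          ring_nf
      _ ≤ ((n : ℝ) + 1) ^ (-s) *
            (2 ^ (2 - (3 / 2 - s)) / (1 - (3 / 2 - s)) * ((n : ℝ) + 1) ^ (1 - (3 / 2 - s))) := by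
          gcongr
          exact sum_rpow_neg_le_of_lt_one (by linarith) fun m hm ↦ (mem_filter.1 hm).2
      _ = _ := by
          rw [mul_left_comm, ← rpow_add hn]
          ring_nf
  have hlower : ∑ m ∈ M with ¬m ≤ n, ((m : ℝ) + 1) ^ (-1 : ℝ) * ((m : ℝ) + 1) ^ (-(1 / 2 : ℝ)) ≤
      2 ^ (3 / 2 : ℝ) / (3 / 2 - 1) * ((n : ℝ) + 1) ^ (-(1 / 2 : ℝ)) :=
    calc _ = ∑ m ∈ M with ¬m ≤ n, ((m : ℝ) + 1) ^ (-(3 / 2 : ℝ)) :=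
          sum_congr rfl fun m _ ↦ by rw [← rpow_add (by positivity)]; norm_num
      _ ≤ 2 ^ (3 / 2 : ℝ) / (3 / 2 - 1) * (((n + 1 : ℕ) : ℝ) + 1) ^ (1 - 3 / 2 : ℝ) :=
          sum_rpow_neg_le_of_one_lt (by norm_num) fun m hm ↦ not_le.1 (mem_filter.1 hm).2
      _ ≤ _ := by
          gcongr
          push_cast
          rw [show (1 - 3 / 2 : ℝ) = -(1 / 2) by norm_num]
          exact rpow_le_rpow_of_nonpos hn (by linarith) (by norm_num)
  linarith

theorem stmt5_general (s : ℝ) (hs0 : 1 / 2 < s) :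
    ∃ C > 0, ∀ x : ℕ → ℝ, ∀ hx : (Function.support x).Finite, (∀ n, 0 ≤ x n) →
      ∀ M : Finset ℕ,
        ∑ m ∈ M, (∑ n ∈ hx.toFinset,
            (if m ≤ n then ((m : ℝ) + 1) ^ (s - 1) * ((n : ℝ) + 1) ^ (-s)
              else ((m : ℝ) + 1) ^ (-1 : ℝ)) * x n) ^ 2
          ≤ C * ∑ n ∈ hx.toFinset, (x n) ^ 2 := by
  obtain ⟨α, hα, hrow⟩ := hatA_row_sum_le hs0
  obtain ⟨β, hβ, hcol⟩ := hatA_col_sum_le hs0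
  refine ⟨α * β, mul_pos hα hβ, fun x hx _ M ↦ ?_⟩
  exact schur_test (hatA_nonneg s) (fun n ↦ by positivity) hα.le (fun m _ ↦ hrow m _)
    (fun n _ ↦ hcol n M) x

/-- The matrix `Â_{mn} = m^{s-1}·n^{-s}` for `n ≥ m` and `Â_{mn} = m⁻¹` for
`m > n` (indices `m, n ≥ 1`) defines a bounded operator on `ℓ²` when
`s ∈ (1/2, 2]`.  Here indices are shifted: `m, n : ℕ` represent `m+1, n+1`. -/
theorem stmt5 (s : ℝ) (hs0 : 1 / 2 < s) (hs : s ≤ 2) :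
    ∃ C > 0, ∀ x : ℕ → ℝ, ∀ hx : (Function.support x).Finite, (∀ n, 0 ≤ x n) →
      ∀ M : Finset ℕ,
        ∑ m ∈ M, (∑ n ∈ hx.toFinset,
            (if m ≤ n then ((m : ℝ) + 1) ^ (s - 1) * ((n : ℝ) + 1) ^ (-s)
              else ((m : ℝ) + 1) ^ (-1 : ℝ)) * x n) ^ 2
          ≤ C * ∑ n ∈ hx.toFinset, (x n) ^ 2 :=
  stmt5_general s hs0
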